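/- arXiv:2209.05444 — 6 statements merged into one kernel-verified Lean document; each statement's English description precedes it below -/
import Mathlib

section
/- Let α ≥ 1 and β ≥ 0 be real numbers. Then the tilted Bell expression satisfies I_α^β ≤ β + 2α + min{α(M₁ + min{M₁, M₂}) + M₂, 2}, where M₁ and M₂ are the measurement-dependence parameters. -/
open MeasureTheory

/-- A density on a measure space: measurable, a.e. nonnegative, integrable, integral one. -/
def IsDensity {Λ : Type*} [MeasurableSpace Λ] (μ : Measure Λ) (p : Λ → ℝ) : Prop :=
  Measurable p ∧ (∀ᵐ l ∂μ, 0 ≤ p l) ∧ Integrable p μ ∧ ∫ l, p l ∂μ = 1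

/-- A deterministic ±1-valued measurable outcome function. -/
def IsSign {Λ : Type*} [MeasurableSpace Λ] (A : Λ → ℝ) : Prop :=
  Measurable A ∧ ∀ l, A l = 1 ∨ A l = -1

section Helpers

variable {Λ : Type*} [MeasurableSpace Λ] {μ : Measure Λ}

lemma IsSign.abs_eq {A : Λ → ℝ} (hA : IsSign A) (l : Λ) : |A l| = 1 := by
  rcases hA.2 l with h | h <;> simp [h]

lemma IsSign.neg {A : Λ → ℝ} (hA : IsSign A) : IsSign (fun l => -A l) :=
  ⟨hA.1.neg, fun l => by rcases hA.2 l with h | h <;> simp [h]⟩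

lemma integrable_mul_bdd {p h : Λ → ℝ} (hp : Integrable p μ) (hh : Measurable h)
    (C : ℝ) (hC : ∀ l, |h l| ≤ C) : Integrable (fun l => p l * h l) μ := by
  have := hp.bdd_mul hh.aestronglyMeasurable (ae_of_all _ (by simpa [Real.norm_eq_abs] using hC))
  simpa [mul_comm] using this

lemma int_mul_le {p f g : Λ → ℝ} (hpf : Integrable (fun l => p l * f l) μ)
    (hpg : Integrable (fun l => p l * g l) μ) (hp0 : ∀ᵐ l ∂μ, 0 ≤ p l)
    (hfg : ∀ l, f l ≤ g l) : ∫ l, p l * f l ∂μ ≤ ∫ l, p l * g l ∂μ :=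
  integral_mono_ae hpf hpg (hp0.mono fun l hl => mul_le_mul_of_nonneg_left (hfg l) hl)

lemma int_diff_mul_le {p q h : Λ → ℝ} (hpq : Integrable (fun l => (q l - p l) * h l) μ)
    (hd : Integrable (fun l => |q l - p l|) μ) (hh : ∀ l, |h l| ≤ 1) :
    ∫ l, (q l - p l) * h l ∂μ ≤ ∫ l, |q l - p l| ∂μ := by
  refine le_trans (le_abs_self _) (le_trans (by
    simpa [Real.norm_eq_abs] using
      norm_integral_le_integral_norm (μ := μ) (fun l => (q l - p l) * h l)) ?_)
  refine integral_mono (by simpa [abs_mul] using hpq.abs) hd fun l => ?_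
  calc |q l - p l| * |h l| ≤ |q l - p l| * 1 :=
        mul_le_mul_of_nonneg_left (hh l) (abs_nonneg _)
    _ = |q l - p l| := mul_one _

lemma diff_bound {p q A B : Λ → ℝ} (hp : Integrable p μ) (hq : Integrable q μ)
    (hA : IsSign A) (hB : IsSign B) :
    ∫ l, q l * (A l * B l) ∂μ - ∫ l, p l * (A l * B l) ∂μ ≤ ∫ l, |q l - p l| ∂μ := by
  have hb : ∀ l, |A l * B l| ≤ 1 := fun l => by
    rw [abs_mul, hA.abs_eq, hB.abs_eq]; norm_num
  have hm : Measurable fun l => A l * B l := hA.1.mul hB.1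
  have iq := integrable_mul_bdd hq hm 1 hb
  have ip := integrable_mul_bdd hp hm 1 hb
  have e : ∫ l, q l * (A l * B l) ∂μ - ∫ l, p l * (A l * B l) ∂μ
      = ∫ l, (q l - p l) * (A l * B l) ∂μ := by
    rw [← integral_sub iq ip]; congr 1; funext l; ring
  rw [e]
  exact int_diff_mul_le (by simpa [sub_mul, Pi.sub_def] using iq.sub ip) ((hq.sub hp).abs) hb

lemma int_mul_sign_abs_le {p A B : Λ → ℝ} (hp : IsDensity μ p)
    (hA : IsSign A) (hB : IsSign B) : |∫ l, p l * (A l * B l) ∂μ| ≤ 1 := by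
  obtain ⟨hpm, hp0, hpi, hpI⟩ := hp
  have hb : ∀ l, |A l * B l| ≤ 1 := fun l => by
    rw [abs_mul, hA.abs_eq, hB.abs_eq]; norm_num
  have ih : Integrable (fun l => p l * (A l * B l)) μ :=
    integrable_mul_bdd hpi (hA.1.mul hB.1) 1 hb
  rw [abs_le]
  constructor
  · have e : ∫ l, p l * (-1 : ℝ) ∂μ = -1 := by
      simp [mul_neg_one, integral_neg, hpI]
    have ipf : Integrable (fun l => p l * (-1 : ℝ)) μ := by
      have e' : (fun l => p l * (-1 : ℝ)) = fun l => -(p l) := by funext l; ring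
      rw [e']; exact hpi.neg
    have := int_mul_le (p := p) (f := fun _ => (-1 : ℝ)) (g := fun l => A l * B l)
      ipf ih hp0 (fun l => (abs_le.mp (hb l)).1)
    rw [e] at this; exact this
  · have e : ∫ l, p l * (1 : ℝ) ∂μ = 1 := by simp [hpI]
    have := int_mul_le (p := p) (f := fun l => A l * B l) (g := fun _ => (1 : ℝ))
      ih (by simpa using hpi) hp0 (fun l => (abs_le.mp (hb l)).2)
    rw [e] at this; exact this

lemma key1 {p A1 A2 B : Λ → ℝ} (hp : IsDensity μ p) (hA1 : IsSign A1)
    (hA2 : IsSign A2) (hB : IsSign B) {α : ℝ} (hα : 1 ≤ α) :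
    α * ∫ l, p l * (A1 l * B l) ∂μ + ∫ l, p l * (A2 l * B l) ∂μ
      ≤ α + ∫ l, p l * (A1 l * A2 l) ∂μ := by
  obtain ⟨hpm, hp0, hpi, hpI⟩ := hp
  have hα0 : (0 : ℝ) ≤ α := le_trans zero_le_one hα
  have hb1 : ∀ l, |A1 l * B l| ≤ 1 := fun l => by
    rw [abs_mul, hA1.abs_eq, hB.abs_eq]; norm_num
  have hb2 : ∀ l, |A2 l * B l| ≤ 1 := fun l => by
    rw [abs_mul, hA2.abs_eq, hB.abs_eq]; norm_num
  have hb3 : ∀ l, |A1 l * A2 l| ≤ 1 := fun l => by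
    rw [abs_mul, hA1.abs_eq, hA2.abs_eq]; norm_num
  have i1 : Integrable (fun l => p l * (A1 l * B l)) μ :=
    integrable_mul_bdd hpi (hA1.1.mul hB.1) 1 hb1
  have i2 : Integrable (fun l => p l * (A2 l * B l)) μ :=
    integrable_mul_bdd hpi (hA2.1.mul hB.1) 1 hb2
  have i3 : Integrable (fun l => p l * (A1 l * A2 l)) μ :=
    integrable_mul_bdd hpi (hA1.1.mul hA2.1) 1 hb3
  have iF : Integrable (fun l => p l * (α * (A1 l * B l) + A2 l * B l)) μ := by
    refine integrable_mul_bdd hpi ?_ (α + 1) (fun l => ?_)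
    · exact (measurable_const.mul (hA1.1.mul hB.1)).add (hA2.1.mul hB.1)
    · refine (abs_add_le _ _).trans ?_
      rw [abs_mul, abs_of_nonneg hα0]
      have h1 := hb1 l; have h2 := hb2 l
      nlinarith
  have iG : Integrable (fun l => p l * (α + A1 l * A2 l)) μ := by
    refine integrable_mul_bdd hpi ?_ (α + 1) (fun l => ?_)
    · exact measurable_const.add (hA1.1.mul hA2.1)
    · refine (abs_add_le _ _).trans ?_
      rw [abs_of_nonneg hα0]
      have h3 := hb3 l; linarith
  have e1 : α * ∫ l, p l * (A1 l * B l) ∂μ + ∫ l, p l * (A2 l * B l) ∂μ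
      = ∫ l, p l * (α * (A1 l * B l) + A2 l * B l) ∂μ := by
    have e : (fun l => p l * (α * (A1 l * B l) + A2 l * B l))
        = fun l => α * (p l * (A1 l * B l)) + p l * (A2 l * B l) := by funext l; ring
    rw [e, integral_add (i1.const_mul α) i2, integral_const_mul]
  have e2 : ∫ l, p l * (α + A1 l * A2 l) ∂μ = α + ∫ l, p l * (A1 l * A2 l) ∂μ := by
    have e : (fun l => p l * (α + A1 l * A2 l))
        = fun l => α * p l + p l * (A1 l * A2 l) := by funext l; ring
    rw [e, integral_add (hpi.const_mul α) i3, integral_const_mul, hpI, mul_one]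
  rw [e1, ← e2]
  refine int_mul_le iF iG hp0 fun l => ?_
  rcases hA1.2 l with h1 | h1 <;> rcases hA2.2 l with h2 | h2 <;>
    rcases hB.2 l with h3 | h3 <;> rw [h1, h2, h3] <;> ring_nf <;> nlinarith

end Helpers

theorem tilted_bell_MDL_bound
    {Λ : Type*} [MeasurableSpace Λ] (μ : Measure Λ) [SigmaFinite μ]
    (α β : ℝ) (hα : 1 ≤ α) (hβ : 0 ≤ β)
    (p1 p11 p12 p21 p22 : Λ → ℝ)
    (hp1 : IsDensity μ p1) (hp11 : IsDensity μ p11) (hp12 : IsDensity μ p12)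
    (hp21 : IsDensity μ p21) (hp22 : IsDensity μ p22)
    (A1 A2 B1 B2 : Λ → ℝ)
    (hA1 : IsSign (Λ := Λ) A1) (hA2 : IsSign (Λ := Λ) A2)
    (hB1 : IsSign (Λ := Λ) B1) (hB2 : IsSign (Λ := Λ) B2)
    (M1 M2 : ℝ)
    (hM1 : M1 = max (∫ l, |p11 l - p21 l| ∂μ) (∫ l, |p12 l - p22 l| ∂μ))
    (hM2 : M2 = max (∫ l, |p11 l - p12 l| ∂μ) (∫ l, |p21 l - p22 l| ∂μ)) :
    β * ∫ l, p1 l * A1 l ∂μ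
      + α * ∫ l, p11 l * A1 l * B1 l ∂μ
      + α * ∫ l, p12 l * A1 l * B2 l ∂μ
      + ∫ l, p21 l * A2 l * B1 l ∂μ
      - ∫ l, p22 l * A2 l * B2 l ∂μ
      ≤ β + 2 * α + min (α * (M1 + min M1 M2) + M2) 2 := by
  have hα0 : (0 : ℝ) ≤ α := le_trans zero_le_one hα
  simp only [mul_assoc]
  -- shorthand integrability
  have i1 := hp1.2.2.1
  have i11 := hp11.2.2.1
  have i12 := hp12.2.2.1
  have i21 := hp21.2.2.1
  have i22 := hp22.2.2.1
  -- M bounds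
  have hD1M1 : ∫ l, |p11 l - p21 l| ∂μ ≤ M1 := hM1 ▸ le_max_left _ _
  have hD2M1 : ∫ l, |p12 l - p22 l| ∂μ ≤ M1 := hM1 ▸ le_max_right _ _
  have hD4M2 : ∫ l, |p11 l - p12 l| ∂μ ≤ M2 := hM2 ▸ le_max_left _ _
  have hD3M2 : ∫ l, |p21 l - p22 l| ∂μ ≤ M2 := hM2 ▸ le_max_right _ _
  -- trivial bounds
  have T11 := int_mul_sign_abs_le hp11 hA1 hB1
  have T12 := int_mul_sign_abs_le hp12 hA1 hB2
  have T21 := int_mul_sign_abs_le hp21 hA2 hB1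
  have T22 := int_mul_sign_abs_le hp22 hA2 hB2
  have TL := int_mul_sign_abs_le hp21 hB1 hB2
  rw [abs_le] at T11 T12 T21 T22 TL
  -- beta term
  have TA : ∫ l, p1 l * A1 l ∂μ ≤ 1 := by
    have h := int_mul_sign_abs_le hp1 hA1 ⟨measurable_const, fun _ => Or.inl rfl⟩
      (B := fun _ => (1 : ℝ))
    simp only [mul_one] at h
    exact (abs_le.mp h).2
  have Fβ : β * ∫ l, p1 l * A1 l ∂μ ≤ β := by
    calc β * ∫ l, p1 l * A1 l ∂μ ≤ β * 1 := mul_le_mul_of_nonneg_left TA hβ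
      _ = β := mul_one β
  -- difference bounds
  have F5 : ∫ l, p11 l * (A1 l * B1 l) ∂μ - ∫ l, p21 l * (A1 l * B1 l) ∂μ
      ≤ ∫ l, |p11 l - p21 l| ∂μ := diff_bound i21 i11 hA1 hB1
  have F6 : ∫ l, p12 l * (A1 l * B2 l) ∂μ - ∫ l, p22 l * (A1 l * B2 l) ∂μ
      ≤ ∫ l, |p12 l - p22 l| ∂μ := diff_bound i22 i12 hA1 hB2
  have F9 : ∫ l, p21 l * (A1 l * A2 l) ∂μ - ∫ l, p22 l * (A1 l * A2 l) ∂μ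
      ≤ ∫ l, |p21 l - p22 l| ∂μ := diff_bound i22 i21 hA1 hA2
  have F10 : ∫ l, p12 l * (A1 l * B2 l) ∂μ - ∫ l, p11 l * (A1 l * B2 l) ∂μ
      ≤ ∫ l, |p11 l - p12 l| ∂μ := by
    have h := diff_bound i11 i12 hA1 hB2
    have e : ∫ l, |p12 l - p11 l| ∂μ = ∫ l, |p11 l - p12 l| ∂μ := by
      congr 1; funext l; exact abs_sub_comm _ _
    rwa [e] at h
  have F11 : ∫ l, p21 l * (A2 l * B2 l) ∂μ - ∫ l, p22 l * (A2 l * B2 l) ∂μ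
      ≤ ∫ l, |p21 l - p22 l| ∂μ := diff_bound i22 i21 hA2 hB2
  have F14 : ∫ l, p11 l * (B1 l * B2 l) ∂μ - ∫ l, p21 l * (B1 l * B2 l) ∂μ
      ≤ ∫ l, |p11 l - p21 l| ∂μ := diff_bound i21 i11 hB1 hB2
  -- key combination bounds
  have F7 : α * ∫ l, p21 l * (A1 l * B1 l) ∂μ + ∫ l, p21 l * (A2 l * B1 l) ∂μ
      ≤ α + ∫ l, p21 l * (A1 l * A2 l) ∂μ := key1 hp21 hA1 hA2 hB1 hα
  have F8 : α * ∫ l, p22 l * (A1 l * B2 l) ∂μ - ∫ l, p22 l * (A2 l * B2 l) ∂μ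
      ≤ α - ∫ l, p22 l * (A1 l * A2 l) ∂μ := by
    have h := key1 hp22 hA1 hA2.neg hB2 hα
    have e1 : ∫ l, p22 l * (-A2 l * B2 l) ∂μ = -∫ l, p22 l * (A2 l * B2 l) ∂μ := by
      rw [show (fun l => p22 l * (-A2 l * B2 l)) = fun l => -(p22 l * (A2 l * B2 l)) from
        by funext l; ring, integral_neg]
    have e2 : ∫ l, p22 l * (A1 l * -A2 l) ∂μ = -∫ l, p22 l * (A1 l * A2 l) ∂μ := by
      rw [show (fun l => p22 l * (A1 l * -A2 l)) = fun l => -(p22 l * (A1 l * A2 l)) from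
        by funext l; ring, integral_neg]
    rw [e1, e2] at h
    linarith
  have F12 : ∫ l, p11 l * (A1 l * B1 l) ∂μ + ∫ l, p11 l * (A1 l * B2 l) ∂μ
      ≤ 1 + ∫ l, p11 l * (B1 l * B2 l) ∂μ := by
    have h := key1 hp11 hB1 hB2 hA1 (le_refl 1)
    have e1 : ∫ l, p11 l * (B1 l * A1 l) ∂μ = ∫ l, p11 l * (A1 l * B1 l) ∂μ := by
      congr 1; funext l; ring
    have e2 : ∫ l, p11 l * (B2 l * A1 l) ∂μ = ∫ l, p11 l * (A1 l * B2 l) ∂μ := by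
      congr 1; funext l; ring
    rw [e1, e2, one_mul] at h
    exact h
  have F13 : ∫ l, p21 l * (A2 l * B1 l) ∂μ - ∫ l, p21 l * (A2 l * B2 l) ∂μ
      ≤ 1 - ∫ l, p21 l * (B1 l * B2 l) ∂μ := by
    have h := key1 hp21 hB1 hB2.neg hA2 (le_refl 1)
    have e1 : ∫ l, p21 l * (B1 l * A2 l) ∂μ = ∫ l, p21 l * (A2 l * B1 l) ∂μ := by
      congr 1; funext l; ring
    have e2 : ∫ l, p21 l * (-B2 l * A2 l) ∂μ = -∫ l, p21 l * (A2 l * B2 l) ∂μ := by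
      rw [show (fun l => p21 l * (-B2 l * A2 l)) = fun l => -(p21 l * (A2 l * B2 l)) from
        by funext l; ring, integral_neg]
    have e3 : ∫ l, p21 l * (B1 l * -B2 l) ∂μ = -∫ l, p21 l * (B1 l * B2 l) ∂μ := by
      rw [show (fun l => p21 l * (B1 l * -B2 l)) = fun l => -(p21 l * (B1 l * B2 l)) from
        by funext l; ring, integral_neg]
    rw [e1, e2, e3, one_mul] at h
    linarith
  -- scaled products
  have Pa : α * (∫ l, p11 l * (A1 l * B1 l) ∂μ - ∫ l, p21 l * (A1 l * B1 l) ∂μ) ≤ α * M1 :=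
    mul_le_mul_of_nonneg_left (F5.trans hD1M1) hα0
  have Pb : α * (∫ l, p12 l * (A1 l * B2 l) ∂μ - ∫ l, p22 l * (A1 l * B2 l) ∂μ) ≤ α * M1 :=
    mul_le_mul_of_nonneg_left (F6.trans hD2M1) hα0
  have Pc : α * (∫ l, p12 l * (A1 l * B2 l) ∂μ - ∫ l, p11 l * (A1 l * B2 l) ∂μ) ≤ α * M2 :=
    mul_le_mul_of_nonneg_left (F10.trans hD4M2) hα0
  have Pd : α * (∫ l, p11 l * (A1 l * B1 l) ∂μ + ∫ l, p11 l * (A1 l * B2 l) ∂μ)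
      ≤ α * (1 + ∫ l, p11 l * (B1 l * B2 l) ∂μ) := mul_le_mul_of_nonneg_left F12 hα0
  have Pe : α * (∫ l, p11 l * (B1 l * B2 l) ∂μ - ∫ l, p21 l * (B1 l * B2 l) ∂μ) ≤ α * M1 :=
    mul_le_mul_of_nonneg_left (F14.trans hD1M1) hα0
  have Pf : (α - 1) * ∫ l, p21 l * (B1 l * B2 l) ∂μ ≤ (α - 1) * 1 :=
    mul_le_mul_of_nonneg_left TL.2 (by linarith)
  have Pg : α * ∫ l, p11 l * (A1 l * B1 l) ∂μ ≤ α * 1 :=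
    mul_le_mul_of_nonneg_left T11.2 hα0
  have Ph : α * ∫ l, p12 l * (A1 l * B2 l) ∂μ ≤ α * 1 :=
    mul_le_mul_of_nonneg_left T12.2 hα0
  -- the three global bounds
  have hG1 : β * ∫ l, p1 l * A1 l ∂μ
      + α * ∫ l, p11 l * (A1 l * B1 l) ∂μ
      + α * ∫ l, p12 l * (A1 l * B2 l) ∂μ
      + ∫ l, p21 l * (A2 l * B1 l) ∂μ
      - ∫ l, p22 l * (A2 l * B2 l) ∂μ
      ≤ β + 2 * α + (α * (M1 + M1) + M2) := by
    have h9 := F9.trans hD3M2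
    linarith
  have hG2 : β * ∫ l, p1 l * A1 l ∂μ
      + α * ∫ l, p11 l * (A1 l * B1 l) ∂μ
      + α * ∫ l, p12 l * (A1 l * B2 l) ∂μ
      + ∫ l, p21 l * (A2 l * B1 l) ∂μ
      - ∫ l, p22 l * (A2 l * B2 l) ∂μ
      ≤ β + 2 * α + (α * (M1 + M2) + M2) := by
    have h11 := F11.trans hD3M2
    linarith
  have hG3 : β * ∫ l, p1 l * A1 l ∂μ
      + α * ∫ l, p11 l * (A1 l * B1 l) ∂μ
      + α * ∫ l, p12 l * (A1 l * B2 l) ∂μ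
      + ∫ l, p21 l * (A2 l * B1 l) ∂μ
      - ∫ l, p22 l * (A2 l * B2 l) ∂μ
      ≤ β + 2 * α + 2 := by
    linarith
  rcases le_total M1 M2 with hm | hm
  · rw [min_eq_left hm]
    rcases le_total (α * (M1 + M1) + M2) 2 with h2 | h2
    · rw [min_eq_left h2]; exact hG1
    · rw [min_eq_right h2]; exact hG3
  · rw [min_eq_right hm]
    rcases le_total (α * (M1 + M2) + M2) 2 with h2 | h2
    · rw [min_eq_left h2]; exact hG2
    · rw [min_eq_right h2]; exact hG3
end

section
/- Let α ≥ 1 and β ≥ 0 be real numbers. Then the tilted Bell expression satisfies I_α^β ≤ β + 2α + αM₁ + (α + 1)M₂, where M₁ and M₂ are the measurement-dependence parameters. -/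
open MeasureTheory

private lemma mul_sign_le (d s : ℝ) (hs : |s| = 1) : d * s ≤ |d| :=
  le_trans (le_abs_self _) (by rw [abs_mul, hs, mul_one])

private lemma core_ineq (α q r a1 a2 b1 b2 : ℝ) (hα : 1 ≤ α) (hq : 0 ≤ q) (hr : 0 ≤ r)
    (ha1 : a1 = 1 ∨ a1 = -1) (ha2 : a2 = 1 ∨ a2 = -1)
    (hb1 : b1 = 1 ∨ b1 = -1) (hb2 : b2 = 1 ∨ b2 = -1) :
    α * (q * (a1 * (b1 + b2))) + r * (a2 * (b1 - b2))
      ≤ 2 * α * q + (|r - q| + (r - q)) := by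
  have h1 : r - q ≤ |r - q| := le_abs_self _
  have h2 : 0 ≤ |r - q| := abs_nonneg _
  have h3 : -(|r - q|) ≤ r - q := neg_abs_le _
  rcases ha1 with rfl | rfl <;> rcases ha2 with rfl | rfl <;>
    rcases hb1 with rfl | rfl <;> rcases hb2 with rfl | rfl <;> nlinarith

private lemma int_mul3 {Λ : Type*} [MeasurableSpace Λ] {μ : Measure Λ}
    {p A B : Λ → ℝ} (hp : IsDensity μ p) (hA : IsSign (Λ := Λ) A) (hB : IsSign (Λ := Λ) B) :
    Integrable (fun l => p l * A l * B l) μ := by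
  have h : Integrable (fun l => (A l * B l) * p l) μ := by
    refine hp.2.2.1.bdd_mul (c := 1) ((hA.1.mul hB.1).aestronglyMeasurable) (Filter.Eventually.of_forall fun l => ?_)
    rcases hA.2 l with h1 | h1 <;> rcases hB.2 l with h2 | h2 <;> simp [h1, h2]
  exact h.congr (Filter.Eventually.of_forall fun l => by ring)

private lemma int_mul2 {Λ : Type*} [MeasurableSpace Λ] {μ : Measure Λ}
    {p A : Λ → ℝ} (hp : IsDensity μ p) (hA : IsSign (Λ := Λ) A) :
    Integrable (fun l => p l * A l) μ := by
  have h : Integrable (fun l => A l * p l) μ := by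
    refine hp.2.2.1.bdd_mul (c := 1) hA.1.aestronglyMeasurable (Filter.Eventually.of_forall fun l => ?_)
    rcases hA.2 l with h1 | h1 <;> simp [h1]
  exact h.congr (Filter.Eventually.of_forall fun l => by ring)

theorem tilted_bell_MDL_bound_one
    {Λ : Type*} [MeasurableSpace Λ] (μ : Measure Λ) [SigmaFinite μ]
    (α β : ℝ) (hα : 1 ≤ α) (hβ : 0 ≤ β)
    (p1 p11 p12 p21 p22 : Λ → ℝ)
    (hp1 : IsDensity μ p1) (hp11 : IsDensity μ p11) (hp12 : IsDensity μ p12)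
    (hp21 : IsDensity μ p21) (hp22 : IsDensity μ p22)
    (A1 A2 B1 B2 : Λ → ℝ)
    (hA1 : IsSign (Λ := Λ) A1) (hA2 : IsSign (Λ := Λ) A2)
    (hB1 : IsSign (Λ := Λ) B1) (hB2 : IsSign (Λ := Λ) B2)
    (M1 M2 : ℝ)
    (hM1 : M1 = max (∫ l, |p11 l - p21 l| ∂μ) (∫ l, |p12 l - p22 l| ∂μ))
    (hM2 : M2 = max (∫ l, |p11 l - p12 l| ∂μ) (∫ l, |p21 l - p22 l| ∂μ)) :
    β * ∫ l, p1 l * A1 l ∂μ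
      + α * ∫ l, p11 l * A1 l * B1 l ∂μ
      + α * ∫ l, p12 l * A1 l * B2 l ∂μ
      + ∫ l, p21 l * A2 l * B1 l ∂μ
      - ∫ l, p22 l * A2 l * B2 l ∂μ
      ≤ β + 2 * α + α * M1 + (α + 1) * M2 := by
  have habsA1 : ∀ l, |A1 l| = 1 := fun l => by rcases hA1.2 l with h | h <;> simp [h]
  have habsA2 : ∀ l, |A2 l| = 1 := fun l => by rcases hA2.2 l with h | h <;> simp [h]
  have habsB2 : ∀ l, |B2 l| = 1 := fun l => by rcases hB2.2 l with h | h <;> simp [h]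
  -- integrability facts
  have i1 := int_mul2 hp1 hA1
  have i11 := int_mul3 hp11 hA1 hB1
  have i12 := int_mul3 hp12 hA1 hB2
  have i21 := int_mul3 hp21 hA2 hB1
  have i22 := int_mul3 hp22 hA2 hB2
  -- flat-lambda integrability for partial sums
  have iS1 : Integrable (fun l => β * (p1 l * A1 l) + α * (p11 l * A1 l * B1 l)) μ :=
    (i1.const_mul β).add (i11.const_mul α)
  have iS2 : Integrable (fun l => β * (p1 l * A1 l) + α * (p11 l * A1 l * B1 l)
      + α * (p12 l * A1 l * B2 l)) μ := iS1.add (i12.const_mul α)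
  have iS3 : Integrable (fun l => β * (p1 l * A1 l) + α * (p11 l * A1 l * B1 l)
      + α * (p12 l * A1 l * B2 l) + p21 l * A2 l * B1 l) μ := iS2.add i21
  have hFint : (∫ l, (β * (p1 l * A1 l) + α * (p11 l * A1 l * B1 l)
        + α * (p12 l * A1 l * B2 l) + p21 l * A2 l * B1 l - p22 l * A2 l * B2 l) ∂μ)
      = β * ∫ l, p1 l * A1 l ∂μ
        + α * ∫ l, p11 l * A1 l * B1 l ∂μ
        + α * ∫ l, p12 l * A1 l * B2 l ∂μ
        + ∫ l, p21 l * A2 l * B1 l ∂μ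
        - ∫ l, p22 l * A2 l * B2 l ∂μ := by
    rw [integral_sub iS3 i22, integral_add iS2 i21, integral_add iS1 (i12.const_mul α),
      integral_add (i1.const_mul β) (i11.const_mul α),
      integral_const_mul, integral_const_mul, integral_const_mul]
  -- integrability for the dominating integrand
  have iabs1 : Integrable (fun l => |p21 l - p11 l|) μ := (hp21.2.2.1.sub hp11.2.2.1).abs
  have isub1 : Integrable (fun l => p21 l - p11 l) μ := hp21.2.2.1.sub hp11.2.2.1
  have iabs2 : Integrable (fun l => |p12 l - p11 l|) μ := (hp12.2.2.1.sub hp11.2.2.1).abs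
  have iabs3 : Integrable (fun l => |p22 l - p21 l|) μ := (hp22.2.2.1.sub hp21.2.2.1).abs
  have iU : Integrable (fun l => |p21 l - p11 l| + (p21 l - p11 l)) μ := iabs1.add isub1
  have iT1 : Integrable (fun l => 2 * α * p11 l + (|p21 l - p11 l| + (p21 l - p11 l))) μ :=
    (hp11.2.2.1.const_mul (2 * α)).add iU
  have iT2 : Integrable (fun l => β * p1 l
      + (2 * α * p11 l + (|p21 l - p11 l| + (p21 l - p11 l)))) μ :=
    (hp1.2.2.1.const_mul β).add iT1
  have iT3 : Integrable (fun l => β * p1 l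
      + (2 * α * p11 l + (|p21 l - p11 l| + (p21 l - p11 l))) + α * |p12 l - p11 l|) μ :=
    iT2.add (iabs2.const_mul α)
  have iG : Integrable (fun l => β * p1 l
      + (2 * α * p11 l + (|p21 l - p11 l| + (p21 l - p11 l)))
      + α * |p12 l - p11 l| + |p22 l - p21 l|) μ := iT3.add iabs3
  have iF : Integrable (fun l => β * (p1 l * A1 l) + α * (p11 l * A1 l * B1 l)
      + α * (p12 l * A1 l * B2 l) + p21 l * A2 l * B1 l - p22 l * A2 l * B2 l) μ :=
    iS3.sub i22
  -- pointwise a.e. bound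
  have hFG : ∀ᵐ l ∂μ, (β * (p1 l * A1 l) + α * (p11 l * A1 l * B1 l)
      + α * (p12 l * A1 l * B2 l) + p21 l * A2 l * B1 l - p22 l * A2 l * B2 l)
      ≤ β * p1 l + (2 * α * p11 l + (|p21 l - p11 l| + (p21 l - p11 l)))
        + α * |p12 l - p11 l| + |p22 l - p21 l| := by
    filter_upwards [hp1.2.1, hp11.2.1, hp21.2.1] with l h1 h11 h21
    have hb1 : β * (p1 l * A1 l) ≤ β * p1 l := by
      have : p1 l * A1 l ≤ p1 l := by
        rcases hA1.2 l with h | h <;> rw [h] <;> linarith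
      exact mul_le_mul_of_nonneg_left this hβ
    have hb2 := core_ineq α (p11 l) (p21 l) (A1 l) (A2 l) (B1 l) (B2 l) hα h11 h21
      (hA1.2 l) (hA2.2 l) (hB1.2 l) (hB2.2 l)
    have hb3 : α * ((p12 l - p11 l) * (A1 l * B2 l)) ≤ α * |p12 l - p11 l| :=
      mul_le_mul_of_nonneg_left
        (mul_sign_le _ _ (by rw [abs_mul, habsA1 l, habsB2 l, mul_one])) (by linarith)
    have hb4 : (p21 l - p22 l) * (A2 l * B2 l) ≤ |p22 l - p21 l| := by
      have := mul_sign_le (p21 l - p22 l) (A2 l * B2 l)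
        (by rw [abs_mul, habsA2 l, habsB2 l, mul_one])
      rwa [abs_sub_comm] at this
    nlinarith [hb1, hb2, hb3, hb4]
  have hmono := integral_mono_ae iF iG hFG
  -- compute the integral of the dominating function
  have hsub0 : ∫ l, (p21 l - p11 l) ∂μ = 0 := by
    rw [integral_sub hp21.2.2.1 hp11.2.2.1, hp21.2.2.2, hp11.2.2.2]; ring
  have hGint : (∫ l, (β * p1 l
        + (2 * α * p11 l + (|p21 l - p11 l| + (p21 l - p11 l)))
        + α * |p12 l - p11 l| + |p22 l - p21 l|) ∂μ)
      = β + 2 * α + (∫ l, |p21 l - p11 l| ∂μ)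
        + α * (∫ l, |p12 l - p11 l| ∂μ) + ∫ l, |p22 l - p21 l| ∂μ := by
    rw [integral_add iT3 iabs3, integral_add iT2 (iabs2.const_mul α),
      integral_add (hp1.2.2.1.const_mul β) iT1,
      integral_add (hp11.2.2.1.const_mul (2 * α)) iU,
      integral_add iabs1 isub1,
      integral_const_mul, integral_const_mul, integral_const_mul,
      hp1.2.2.2, hp11.2.2.2, hsub0]
    ring
  -- final arithmetic
  have hM1a : (∫ l, |p11 l - p21 l| ∂μ) ≤ M1 := hM1 ▸ le_max_left _ _
  have hM2a : (∫ l, |p11 l - p12 l| ∂μ) ≤ M2 := hM2 ▸ le_max_left _ _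
  have hM2b : (∫ l, |p21 l - p22 l| ∂μ) ≤ M2 := hM2 ▸ le_max_right _ _
  have hcomm1 : (∫ l, |p21 l - p11 l| ∂μ) = ∫ l, |p11 l - p21 l| ∂μ := by
    congr 1; funext l; rw [abs_sub_comm]
  have hcomm2 : (∫ l, |p12 l - p11 l| ∂μ) = ∫ l, |p11 l - p12 l| ∂μ := by
    congr 1; funext l; rw [abs_sub_comm]
  have hcomm3 : (∫ l, |p22 l - p21 l| ∂μ) = ∫ l, |p21 l - p22 l| ∂μ := by
    congr 1; funext l; rw [abs_sub_comm]
  have hnn1 : 0 ≤ ∫ l, |p11 l - p21 l| ∂μ := integral_nonneg fun l => abs_nonneg _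
  have hnn2 : 0 ≤ ∫ l, |p11 l - p12 l| ∂μ := integral_nonneg fun l => abs_nonneg _
  calc β * ∫ l, p1 l * A1 l ∂μ
      + α * ∫ l, p11 l * A1 l * B1 l ∂μ
      + α * ∫ l, p12 l * A1 l * B2 l ∂μ
      + ∫ l, p21 l * A2 l * B1 l ∂μ
      - ∫ l, p22 l * A2 l * B2 l ∂μ
      = ∫ l, (β * (p1 l * A1 l) + α * (p11 l * A1 l * B1 l)
          + α * (p12 l * A1 l * B2 l) + p21 l * A2 l * B1 l - p22 l * A2 l * B2 l) ∂μ :=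
        hFint.symm
    _ ≤ ∫ l, (β * p1 l + (2 * α * p11 l + (|p21 l - p11 l| + (p21 l - p11 l)))
          + α * |p12 l - p11 l| + |p22 l - p21 l|) ∂μ := hmono
    _ ≤ β + 2 * α + α * M1 + (α + 1) * M2 := by
        rw [hGint, hcomm1, hcomm2, hcomm3]
        nlinarith [hM1a, hM2a, hM2b, hnn1, hnn2]
end

section
/- Fix a real number φ with 0 < φ < π/2, and for α > 0 set t(α) = √(−cos(4φ)/α² + 1/α² + 2) and f(α) = (3α t(α) + α cos(2φ) t(α) − 2√2 α sin²(φ) + √2(cos(4φ) − 1)) / (10α t(α) + 4α cos(2φ)(t(α) + √2) − 2√2(α + 3 sin²(2φ))). Then f(α) tends to 1/4 as α → ∞. -/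
open Real Filter

theorem critical_l_tendsto_one_quarter (φ : ℝ) (hφ : 0 < φ) (hφ' : φ < Real.pi / 2) :
    Tendsto (fun α : ℝ =>
      (3 * α * Real.sqrt (-Real.cos (4 * φ) / α ^ 2 + 1 / α ^ 2 + 2)
        + α * Real.cos (2 * φ) * Real.sqrt (-Real.cos (4 * φ) / α ^ 2 + 1 / α ^ 2 + 2)
        - 2 * Real.sqrt 2 * α * Real.sin φ ^ 2
        + Real.sqrt 2 * (Real.cos (4 * φ) - 1)) /
      (10 * α * Real.sqrt (-Real.cos (4 * φ) / α ^ 2 + 1 / α ^ 2 + 2)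
        + 4 * α * Real.cos (2 * φ) * (Real.sqrt (-Real.cos (4 * φ) / α ^ 2 + 1 / α ^ 2 + 2)
            + Real.sqrt 2)
        - 2 * Real.sqrt 2 * (α + 3 * Real.sin (2 * φ) ^ 2)))
      atTop (nhds (1 / 4)) := by
  set s : ℝ → ℝ := fun α => Real.sqrt (-Real.cos (4 * φ) / α ^ 2 + 1 / α ^ 2 + 2) with hs_def
  -- the inner radicand tends to 2
  have hpow : Tendsto (fun α : ℝ => α ^ 2) atTop atTop := tendsto_pow_atTop two_ne_zero
  have h1 : Tendsto (fun α : ℝ => -Real.cos (4 * φ) / α ^ 2 + 1 / α ^ 2 + 2) atTop (nhds 2) := by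
    have hA : Tendsto (fun α : ℝ => -Real.cos (4 * φ) / α ^ 2) atTop (nhds 0) :=
      Tendsto.div_atTop tendsto_const_nhds hpow
    have hB : Tendsto (fun α : ℝ => 1 / α ^ 2) atTop (nhds 0) :=
      Tendsto.div_atTop tendsto_const_nhds hpow
    have := (hA.add hB).add (tendsto_const_nhds (x := (2:ℝ)))
    simpa using this
  have hs : Tendsto s atTop (nhds (Real.sqrt 2)) := by
    have := (Real.continuous_sqrt.continuousAt (x := (2:ℝ))).tendsto.comp h1
    simpa [hs_def, Function.comp_def] using this
  have hinvα : Tendsto (fun α : ℝ => 1 / α) atTop (nhds 0) :=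
    Tendsto.div_atTop tendsto_const_nhds tendsto_id
  -- reduced numerator and denominator
  set N : ℝ → ℝ := fun α => 3 * s α + Real.cos (2 * φ) * s α - 2 * Real.sqrt 2 * Real.sin φ ^ 2
      + Real.sqrt 2 * (Real.cos (4 * φ) - 1) * (1 / α) with hN_def
  set D : ℝ → ℝ := fun α => 10 * s α + 4 * Real.cos (2 * φ) * (s α + Real.sqrt 2)
      - 2 * Real.sqrt 2 * (1 + 3 * Real.sin (2 * φ) ^ 2 * (1 / α)) with hD_def
  have hcos : Real.cos (2 * φ) > -1 := by
    have := Real.cos_lt_cos_of_nonneg_of_le_pi (x := 2 * φ) (y := Real.pi)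
      (by linarith) le_rfl (by linarith)
    simpa [Real.cos_pi] using this
  have hsq2 : (0:ℝ) < Real.sqrt 2 := Real.sqrt_pos.mpr (by norm_num)
  have hsin2 : Real.sin φ ^ 2 = 1 / 2 - Real.cos (2 * φ) / 2 := by
    have h := Real.cos_sq φ
    have h2 := Real.sin_sq_add_cos_sq φ
    linarith
  have hL1 : Tendsto N atTop
      (nhds (Real.sqrt 2 * (2 + 2 * Real.cos (2 * φ)))) := by
    have : Tendsto N atTop (nhds (3 * Real.sqrt 2 + Real.cos (2 * φ) * Real.sqrt 2
        - 2 * Real.sqrt 2 * Real.sin φ ^ 2 + Real.sqrt 2 * (Real.cos (4 * φ) - 1) * 0)) := by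
      exact (((hs.const_mul 3).add (hs.const_mul _)).sub tendsto_const_nhds).add
        (hinvα.const_mul _)
    convert this using 2
    rw [hsin2]; ring
  have hL2 : Tendsto D atTop
      (nhds (Real.sqrt 2 * (8 + 8 * Real.cos (2 * φ)))) := by
    have hC : Tendsto (fun α : ℝ => 2 * Real.sqrt 2 * (1 + 3 * Real.sin (2 * φ) ^ 2 * (1 / α)))
        atTop (nhds (2 * Real.sqrt 2 * (1 + 3 * Real.sin (2 * φ) ^ 2 * 0))) :=
      (tendsto_const_nhds.add (hinvα.const_mul _)).const_mul _
    have : Tendsto D atTop (nhds (10 * Real.sqrt 2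
        + 4 * Real.cos (2 * φ) * (Real.sqrt 2 + Real.sqrt 2)
        - 2 * Real.sqrt 2 * (1 + 3 * Real.sin (2 * φ) ^ 2 * 0))) :=
      ((hs.const_mul 10).add ((hs.add tendsto_const_nhds).const_mul _)).sub hC
    convert this using 2
    ring
  have hL2ne : Real.sqrt 2 * (8 + 8 * Real.cos (2 * φ)) ≠ 0 := by
    have : (8:ℝ) + 8 * Real.cos (2 * φ) > 0 := by linarith
    positivity
  have hdiv := hL1.div hL2 hL2ne
  have hval : Real.sqrt 2 * (2 + 2 * Real.cos (2 * φ)) /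
      (Real.sqrt 2 * (8 + 8 * Real.cos (2 * φ))) = 1 / 4 := by
    rw [div_eq_div_iff hL2ne (by norm_num)]
    ring
  rw [hval] at hdiv
  refine hdiv.congr' ?_
  filter_upwards [eventually_gt_atTop (0:ℝ)] with α hα
  have hαne : α ≠ 0 := ne_of_gt hα
  have hNum : N α = (3 * α * s α + α * Real.cos (2 * φ) * s α
      - 2 * Real.sqrt 2 * α * Real.sin φ ^ 2 + Real.sqrt 2 * (Real.cos (4 * φ) - 1)) / α := by
    simp only [hN_def]; field_simp
  have hDen : D α = (10 * α * s α + 4 * α * Real.cos (2 * φ) * (s α + Real.sqrt 2)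
      - 2 * Real.sqrt 2 * (α + 3 * Real.sin (2 * φ) ^ 2)) / α := by
    simp only [hD_def]; field_simp
  show N α / D α = _
  rw [hNum, hDen, div_div_div_cancel_right₀ hαne]
end

section
/- Let w be a real number with −1/4 < w < 1, and set ξ = √(4w + 5). For every real l, the inequality (1/(2(ξ−1)))·(2l(−4w + 7ξ − 15) + (1−3l)·(√(ξ−2)/√(4−ξ))·sin(2·arcsin(3−ξ)) + 8w − 10ξ + 22) − l·max(0, w) ≤ 0 holds if and only if l ≤ 0. In particular, the expression is strictly positive for every l > 0. -/
theorem ZRLH_on_tilted_hardy_behavior_iff (w ξ : ℝ)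
    (hw₁ : -(1 / 4) < w) (hw₂ : w < 1) (hξ : ξ = Real.sqrt (4 * w + 5)) :
    ∀ l : ℝ,
      (1 / (2 * (ξ - 1)))
          * (2 * l * (-(4 * w) + 7 * ξ - 15)
              + (1 - 3 * l) * (Real.sqrt (ξ - 2) / Real.sqrt (4 - ξ))
                  * Real.sin (2 * Real.arcsin (3 - ξ))
              + 8 * w - 10 * ξ + 22)
        - l * max 0 w ≤ 0
      ↔ l ≤ 0 := by
  intro l
  have h5 : (0:ℝ) ≤ 4 * w + 5 := by linarith
  have hξ0 : 0 ≤ ξ := hξ ▸ Real.sqrt_nonneg _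
  have hξ2 : ξ ^ 2 = 4 * w + 5 := by rw [hξ]; exact Real.sq_sqrt h5
  have hgt2 : 2 < ξ := by nlinarith
  have hlt3 : ξ < 3 := by nlinarith
  have key : Real.sqrt (ξ - 2) / Real.sqrt (4 - ξ) * Real.sin (2 * Real.arcsin (3 - ξ))
      = 2 * (3 - ξ) * (ξ - 2) := by
    have ha : Real.sqrt (ξ - 2) * Real.sqrt (ξ - 2) = ξ - 2 :=
      Real.mul_self_sqrt (by linarith)
    have hb : (0:ℝ) < Real.sqrt (4 - ξ) := Real.sqrt_pos.mpr (by linarith)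
    have hsin : Real.sin (2 * Real.arcsin (3 - ξ))
        = 2 * (3 - ξ) * Real.sqrt (1 - (3 - ξ) ^ 2) := by
      rw [Real.sin_two_mul, Real.sin_arcsin (by linarith) (by linarith), Real.cos_arcsin]
    have hfact : (1 : ℝ) - (3 - ξ) ^ 2 = (4 - ξ) * (ξ - 2) := by ring
    have hsq : Real.sqrt ((4 - ξ) * (ξ - 2))
        = Real.sqrt (4 - ξ) * Real.sqrt (ξ - 2) := Real.sqrt_mul (by linarith) _
    rw [hsin, hfact, hsq]
    field_simp
    linear_combination (3 - ξ) * ha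
  have h1 : ξ - 1 > 0 := by linarith
  have hLHS : (1 / (2 * (ξ - 1)))
          * (2 * l * (-(4 * w) + 7 * ξ - 15)
              + (1 - 3 * l) * (Real.sqrt (ξ - 2) / Real.sqrt (4 - ξ))
                  * Real.sin (2 * Real.arcsin (3 - ξ))
              + 8 * w - 10 * ξ + 22)
        - l * max 0 w
      = l * (2 * (ξ - 2) ^ 2 / (ξ - 1) - max 0 w) := by
    rw [mul_assoc (1 - 3 * l), key]
    field_simp
    ring_nf
    linear_combination (2 * (l - 1)) * hξ2
  rw [hLHS]
  have hc : 0 < 2 * (ξ - 2) ^ 2 / (ξ - 1) - max 0 w := by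
    rcases le_or_gt w 0 with hw | hw
    · rw [max_eq_left hw]
      have h2 : 0 < 2 * (ξ - 2) ^ 2 / (ξ - 1) := div_pos (by nlinarith) (by linarith)
      linarith
    · rw [max_eq_right hw.le]
      rw [lt_sub_iff_add_lt, ← sub_pos]
      have h3 : 0 < (3 - ξ) ^ 3 := pow_pos (by linarith) 3
      have : 2 * (ξ - 2) ^ 2 / (ξ - 1) - w = (3 - ξ) ^ 3 / (4 * (ξ - 1)) := by
        field_simp
        linear_combination (ξ - 1) * hξ2
      nlinarith [div_pos h3 (by linarith : (0:ℝ) < 4 * (ξ - 1)), this]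
  constructor <;> intro h <;> nlinarith [hc]
end

section
/- Let (Λ, μ) be a measure space, let p and q be densities on Λ (measurable, nonnegative, integrable, with ∫p dμ = ∫q dμ = 1), let A₁, A₂, B₁, B₂: Λ → {−1, +1} be measurable, and let α ≥ 1 be real. Then α∫ p·A₁·(B₂ + B₁) dμ − ∫ q·A₂·(B₂ − B₁) dμ ≤ α(∫|p − q| dμ + 2). -/
open MeasureTheory

theorem T3_bound {Λ : Type*} [MeasurableSpace Λ] (μ : Measure Λ)
    (p q : Λ → ℝ) (hp : IsDensity μ p) (hq : IsDensity μ q)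
    (A1 A2 B1 B2 : Λ → ℝ)
    (hA1 : IsSign (Λ := Λ) A1) (hA2 : IsSign (Λ := Λ) A2)
    (hB1 : IsSign (Λ := Λ) B1) (hB2 : IsSign (Λ := Λ) B2)
    (α : ℝ) (hα : 1 ≤ α) :
    α * ∫ l, p l * A1 l * (B2 l + B1 l) ∂μ
      - ∫ l, q l * A2 l * (B2 l - B1 l) ∂μ
      ≤ α * ((∫ l, |p l - q l| ∂μ) + 2) := by
  obtain ⟨hpm, hpnn, hpi, hp1⟩ := hp
  obtain ⟨hqm, hqnn, hqi, hq1⟩ := hq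
  set f : Λ → ℝ := fun l => A1 l * (B2 l + B1 l) with hf
  set g : Λ → ℝ := fun l => A2 l * (B2 l - B1 l) with hg
  have hfm : Measurable f := hA1.1.mul (hB2.1.add hB1.1)
  have hgm : Measurable g := hA2.1.mul (hB2.1.sub hB1.1)
  have hfb : ∀ l, ‖f l‖ ≤ 2 := by
    intro l
    rcases hA1.2 l with h1 | h1 <;> rcases hB1.2 l with h2 | h2 <;>
      rcases hB2.2 l with h3 | h3 <;> norm_num [hf, h1, h2, h3]
  have hgb : ∀ l, ‖g l‖ ≤ 2 := by
    intro l
    rcases hA2.2 l with h1 | h1 <;> rcases hB1.2 l with h2 | h2 <;>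
      rcases hB2.2 l with h3 | h3 <;> norm_num [hg, h1, h2, h3]
  have hsum : ∀ l, |f l| + |g l| = 2 := by
    intro l
    rcases hA1.2 l with h0 | h0 <;> rcases hA2.2 l with h1 | h1 <;>
      rcases hB1.2 l with h2 | h2 <;> rcases hB2.2 l with h3 | h3 <;>
      norm_num [hf, hg, h0, h1, h2, h3, abs_of_nonneg, abs_of_nonpos]
  have hgabs : ∀ l, |(|g l| - 1)| = 1 := by
    intro l
    rcases hA2.2 l with h1 | h1 <;> rcases hB1.2 l with h2 | h2 <;>
      rcases hB2.2 l with h3 | h3 <;> norm_num [hg, h1, h2, h3]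
  -- integrability facts
  have hpf : Integrable (fun l => p l * f l) μ := by
    have := hpi.bdd_mul hfm.aestronglyMeasurable (ae_of_all _ hfb)
    simpa [mul_comm] using this
  have hpaf : Integrable (fun l => p l * |f l|) μ := by
    have := hpi.bdd_mul (c := 2) (hfm.abs).aestronglyMeasurable
      (ae_of_all _ fun l => by simpa using hfb l)
    simpa [mul_comm] using this
  have hpag : Integrable (fun l => p l * |g l|) μ := by
    have := hpi.bdd_mul (c := 2) (hgm.abs).aestronglyMeasurable
      (ae_of_all _ fun l => by simpa using hgb l)
    simpa [mul_comm] using this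
  have hqg : Integrable (fun l => q l * g l) μ := by
    have := hqi.bdd_mul hgm.aestronglyMeasurable (ae_of_all _ hgb)
    simpa [mul_comm] using this
  have hqag : Integrable (fun l => q l * |g l|) μ := by
    have := hqi.bdd_mul (c := 2) (hgm.abs).aestronglyMeasurable
      (ae_of_all _ fun l => by simpa using hgb l)
    simpa [mul_comm] using this
  have hpqi : Integrable (fun l => p l - q l) μ := hpi.sub hqi
  have hpqa : Integrable (fun l => |p l - q l|) μ := hpqi.abs
  have hpqg : Integrable (fun l => (q l - p l) * (|g l| - 1)) μ := by
    have := (hqi.sub hpi).bdd_mul (c := 1)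
      ((hgm.abs.sub measurable_const).aestronglyMeasurable :
        AEStronglyMeasurable (fun l => |g l| - 1) μ)
      (ae_of_all _ fun l => by simp only [Real.norm_eq_abs]; exact le_of_eq (hgabs l))
    simpa [mul_comm] using this
  -- step 1 : ∫ p f ≤ ∫ p |f|
  have h1 : ∫ l, p l * f l ∂μ ≤ ∫ l, p l * |f l| ∂μ := by
    refine integral_mono_ae hpf hpaf ?_
    filter_upwards [hpnn] with l hl
    exact mul_le_mul_of_nonneg_left (le_abs_self _) hl
  -- step 2 : -∫ q g ≤ ∫ q |g|
  have h2 : -∫ l, q l * g l ∂μ ≤ ∫ l, q l * |g l| ∂μ := by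
    rw [← integral_neg]
    refine integral_mono_ae hqg.neg hqag ?_
    filter_upwards [hqnn] with l hl
    have : -(q l * g l) = q l * (-g l) := by ring
    rw [this]
    exact mul_le_mul_of_nonneg_left (neg_le_abs _) hl
  -- step 3 : ∫ q |g| ≤ ∫ p |g| + ∫ |p - q|
  have h3 : ∫ l, q l * |g l| ∂μ ≤ (∫ l, p l * |g l| ∂μ) + ∫ l, |p l - q l| ∂μ := by
    have hdiff : ∫ l, (q l - p l) * (|g l| - 1) ∂μ
        = (∫ l, q l * |g l| ∂μ) - ∫ l, p l * |g l| ∂μ := by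
      have hint0 : ∫ l, q l - p l ∂μ = 0 := by
        rw [integral_sub hqi hpi, hq1, hp1]; ring
      have hqp1 : Integrable (fun l => q l * |g l| - p l * |g l|) μ := hqag.sub hpag
      have hqp2 : Integrable (fun l => q l - p l) μ := hqi.sub hpi
      have e1 : ∫ l, (q l * |g l| - p l * |g l|) - (q l - p l) ∂μ
          = (∫ l, q l * |g l| - p l * |g l| ∂μ) - ∫ l, q l - p l ∂μ :=
        integral_sub hqp1 hqp2
      have e2 : ∫ l, q l * |g l| - p l * |g l| ∂μ
          = (∫ l, q l * |g l| ∂μ) - ∫ l, p l * |g l| ∂μ := integral_sub hqag hpag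
      have e3 : (fun l => (q l - p l) * (|g l| - 1))
          = fun l => (q l * |g l| - p l * |g l|) - (q l - p l) := by
        funext l; ring
      rw [e3, e1, e2, hint0]
      ring
    have hle : ∫ l, (q l - p l) * (|g l| - 1) ∂μ ≤ ∫ l, |p l - q l| ∂μ := by
      refine integral_mono hpqg hpqa ?_
      intro l
      calc (q l - p l) * (|g l| - 1) ≤ |(q l - p l) * (|g l| - 1)| := le_abs_self _
        _ = |q l - p l| * |(|g l| - 1)| := abs_mul _ _
        _ = |p l - q l| := by rw [hgabs l, mul_one, abs_sub_comm]
    rw [hdiff] at hle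
    linarith
  -- step 4 : ∫ p (|f| + |g|) = 2
  have h4 : (∫ l, p l * |f l| ∂μ) + ∫ l, p l * |g l| ∂μ = 2 := by
    rw [← integral_add hpaf hpag]
    have : (fun l => p l * |f l| + p l * |g l|) = fun l => 2 * p l := by
      funext l
      linear_combination p l * hsum l
    rw [this, integral_const_mul, hp1]
    norm_num
  -- nonnegativity facts
  have hpag_nn : 0 ≤ ∫ l, p l * |g l| ∂μ := by
    refine integral_nonneg_of_ae ?_
    filter_upwards [hpnn] with l hl
    exact mul_nonneg hl (abs_nonneg _)
  have hpqa_nn : 0 ≤ ∫ l, |p l - q l| ∂μ :=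
    integral_nonneg fun l => abs_nonneg _
  -- assemble
  have hα0 : (0:ℝ) ≤ α := by linarith
  have h1' : α * ∫ l, p l * f l ∂μ ≤ α * ∫ l, p l * |f l| ∂μ :=
    mul_le_mul_of_nonneg_left h1 hα0
  have h4' : α * ∫ l, p l * |f l| ∂μ + α * ∫ l, p l * |g l| ∂μ = 2 * α := by
    rw [← mul_add, h4]; ring
  have h5 : ∫ l, p l * |g l| ∂μ ≤ α * ∫ l, p l * |g l| ∂μ :=
    le_mul_of_one_le_left hpag_nn hα
  have h6 : ∫ l, |p l - q l| ∂μ ≤ α * ∫ l, |p l - q l| ∂μ :=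
    le_mul_of_one_le_left hpqa_nn hα
  have egoal1 : ∫ l, p l * A1 l * (B2 l + B1 l) ∂μ = ∫ l, p l * f l ∂μ := by
    congr 1; funext l; simp [hf, mul_assoc]
  have egoal2 : ∫ l, q l * A2 l * (B2 l - B1 l) ∂μ = ∫ l, q l * g l ∂μ := by
    congr 1; funext l; simp [hg, mul_assoc]
  have erhs : α * ((∫ l, |p l - q l| ∂μ) + 2)
      = α * ∫ l, |p l - q l| ∂μ + 2 * α := by ring
  rw [egoal1, egoal2, erhs]
  linarith
end

section
/- Fix real numbers α ≥ 1 and φ with 0 < φ < π/2, and set μ = arctan(sin(2φ)/α). Define the expectation values ⟨x₁⟩ = cos(2φ), ⟨x₂⟩ = 0, ⟨y₁⟩ = ⟨y₂⟩ = cos(2φ)cos(μ), ⟨x₁y₁⟩ = ⟨x₁y₂⟩ = cos(μ), ⟨x₂y₁⟩ = sin(2φ)sin(μ), ⟨x₂y₂⟩ = −sin(2φ)sin(μ), and the probabilities p(++|00) = (1 + ⟨x₁⟩ + ⟨y₁⟩ + ⟨x₁y₁⟩)/4, p(+−|01) = (1 + ⟨x₁⟩ − ⟨y₂⟩ − ⟨x₁y₂⟩)/4,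 p(−+|10) = (1 − ⟨x₂⟩ + ⟨y₁⟩ − ⟨x₂y₁⟩)/4, p(++|11) = (1 + ⟨x₂⟩ + ⟨y₂⟩ + ⟨x₂y₂⟩)/4. Then for every real l, the PRBLG expression l·p(++|00) − (1−3l)(p(+−|01) + p(−+|10) + p(++|11)) is ≤ 0 if and only if l ≤ (3αt + α cos(2φ)t − 2√2 α sin²(φ) + √2(cos(4φ) − 1)) / (10αt + 4α cos(2φ)(t + √2) − 2√2(α + 3sin²(2φ))), where t = √(−cos(4φ)/α² + 1/α² + 2). -/
set_option maxHeartbeats 1600000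


theorem PRBLG_on_AMP_tilted_behavior_iff
    (α φ m t : ℝ) (hα : 1 ≤ α) (hφ : 0 < φ) (hφ' : φ < Real.pi / 2)
    (hm : m = Real.arctan (Real.sin (2 * φ) / α))
    (ht : t = Real.sqrt (-Real.cos (4 * φ) / α ^ 2 + 1 / α ^ 2 + 2))
    (Ex1 Ex2 Ey1 Ey2 Ex1y1 Ex1y2 Ex2y1 Ex2y2 p00 p01 p10 p11 : ℝ)
    (hEx1 : Ex1 = Real.cos (2 * φ)) (hEx2 : Ex2 = 0)
    (hEy1 : Ey1 = Real.cos (2 * φ) * Real.cos m)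
    (hEy2 : Ey2 = Real.cos (2 * φ) * Real.cos m)
    (hEx1y1 : Ex1y1 = Real.cos m) (hEx1y2 : Ex1y2 = Real.cos m)
    (hEx2y1 : Ex2y1 = Real.sin (2 * φ) * Real.sin m)
    (hEx2y2 : Ex2y2 = -(Real.sin (2 * φ) * Real.sin m))
    (hp00 : p00 = (1 + Ex1 + Ey1 + Ex1y1) / 4)
    (hp01 : p01 = (1 + Ex1 - Ey2 - Ex1y2) / 4)
    (hp10 : p10 = (1 - Ex2 + Ey1 - Ex2y1) / 4)
    (hp11 : p11 = (1 + Ex2 + Ey2 + Ex2y2) / 4) :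
    ∀ l : ℝ,
      l * p00 - (1 - 3 * l) * (p01 + p10 + p11) ≤ 0 ↔
        l ≤ (3 * α * t + α * Real.cos (2 * φ) * t
              - 2 * Real.sqrt 2 * α * Real.sin φ ^ 2
              + Real.sqrt 2 * (Real.cos (4 * φ) - 1)) /
            (10 * α * t + 4 * α * Real.cos (2 * φ) * (t + Real.sqrt 2)
              - 2 * Real.sqrt 2 * (α + 3 * Real.sin (2 * φ) ^ 2)) := by
  have hα0 : (0:ℝ) < α := by linarith
  have hs : 0 < Real.sin (2 * φ) :=
    Real.sin_pos_of_pos_of_lt_pi (by linarith) (by linarith [Real.pi_pos])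
  have hpyth := Real.sin_sq_add_cos_sq (2 * φ)
  have hc1 : -1 < Real.cos (2 * φ) := by nlinarith [hs, hpyth]
  have hA : (0:ℝ) < α ^ 2 + Real.sin (2 * φ) ^ 2 := by positivity
  set r := Real.sqrt (α ^ 2 + Real.sin (2 * φ) ^ 2) with hrdef
  clear_value r
  have hr : 0 < r := by rw [hrdef]; exact Real.sqrt_pos.mpr hA
  have hr2 : r ^ 2 = α ^ 2 + Real.sin (2 * φ) ^ 2 := by
    rw [hrdef]; exact Real.sq_sqrt hA.le
  have h1x : Real.sqrt (1 + (Real.sin (2 * φ) / α) ^ 2) = r / α := by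
    rw [show 1 + (Real.sin (2 * φ) / α) ^ 2 = (r / α) ^ 2 by
      field_simp; linarith [hr2]]
    exact Real.sqrt_sq (by positivity)
  have hco : Real.cos m = α / r := by
    rw [hm, Real.cos_arctan, h1x, one_div_div]
  have hsi : Real.sin m = Real.sin (2 * φ) / r := by
    rw [hm, Real.sin_arctan, h1x]
    field_simp
  have hc4 : Real.cos (4 * φ) = 1 - 2 * Real.sin (2 * φ) ^ 2 := by
    rw [show (4:ℝ) * φ = 2 * (2 * φ) by ring, Real.cos_two_mul]
    nlinarith [hpyth]
  have ht2 : t = Real.sqrt 2 * r / α := by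
    rw [ht, show -Real.cos (4 * φ) / α ^ 2 + 1 / α ^ 2 + 2
        = (Real.sqrt 2 * r / α) ^ 2 by
      rw [hc4, div_pow, mul_pow, Real.sq_sqrt (by norm_num : (0:ℝ) ≤ 2), hr2]
      field_simp
      ring]
    exact Real.sqrt_sq (by positivity)
  have hsqrt2 : (0:ℝ) < Real.sqrt 2 := by positivity
  have ht0 : 0 < t := by rw [ht2]; positivity
  have hcm' : Real.cos m = Real.sqrt 2 / t := by
    rw [hco, ht2]
    field_simp
  have hsm' : Real.sin m = Real.sqrt 2 * Real.sin (2 * φ) / (α * t) := by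
    rw [hsi, ht2]
    field_simp
  have hsqφ : Real.sin φ ^ 2 = (1 - Real.cos (2 * φ)) / 2 := by
    have h1 := Real.sin_sq_add_cos_sq φ
    have h2 := Real.cos_two_mul φ
    nlinarith
  -- nonnegativity / positivity of probabilities
  have h10 : 0 ≤ p10 := by
    have hadd := Real.neg_one_le_cos (2 * φ + m)
    rw [Real.cos_add] at hadd
    rw [hp10, hEx2, hEy1, hEx2y1]
    linarith
  have h11 : 0 ≤ p11 := by
    have hadd := Real.neg_one_le_cos (2 * φ + m)
    rw [Real.cos_add] at hadd
    rw [hp11, hEx2, hEy2, hEx2y2]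
    linarith
  have h0001 : 0 < p00 + 3 * p01 := by
    rw [hp00, hp01, hEx1, hEy1, hEy2, hEx1y1, hEx1y2]
    nlinarith [hc1, Real.cos_le_one m,
      mul_pos (show (0:ℝ) < 1 + Real.cos (2 * φ) by linarith)
        (show (0:ℝ) < 4 - 2 * Real.cos m by nlinarith [Real.cos_le_one m])]
  have hP : 0 < p00 + 3 * (p01 + p10 + p11) := by linarith
  have h4at : (0:ℝ) < 4 * α * t := by positivity
  -- numerator identity
  have hN : 3 * α * t + α * Real.cos (2 * φ) * t
      - 2 * Real.sqrt 2 * α * Real.sin φ ^ 2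
      + Real.sqrt 2 * (Real.cos (4 * φ) - 1)
      = 4 * α * t * (p01 + p10 + p11) := by
    rw [hp01, hp10, hp11, hEx1, hEx2, hEy1, hEy2, hEx1y2, hEx2y1, hEx2y2,
      hcm', hsm', hsqφ, hc4]
    field_simp
    ring
  have hD : 10 * α * t + 4 * α * Real.cos (2 * φ) * (t + Real.sqrt 2)
      - 2 * Real.sqrt 2 * (α + 3 * Real.sin (2 * φ) ^ 2)
      = 4 * α * t * (p00 + 3 * (p01 + p10 + p11)) := by
    rw [hp00, hp01, hp10, hp11, hEx1, hEx2, hEy1, hEy2, hEx1y1, hEx1y2,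
      hEx2y1, hEx2y2, hcm', hsm']
    have hpy : Real.sin (2 * φ) ^ 2 = 1 - Real.cos (2 * φ) ^ 2 := by linarith [hpyth]
    rw [hpy]
    field_simp
    linear_combination (6 * Real.sqrt 2) * hpyth
  intro l
  rw [hN, hD, mul_div_mul_left _ _ (ne_of_gt h4at), le_div_iff₀ hP]
  have hring : l * p00 - (1 - 3 * l) * (p01 + p10 + p11)
      = l * (p00 + 3 * (p01 + p10 + p11)) - (p01 + p10 + p11) := by ring
  constructor <;> intro h <;> linarith
end
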